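/- arXiv:2308.16292 — 9 statements merged into one kernel-verified Lean document; each statement's English description precedes it below -/
import Mathlib

section
/- If α is a permutation word (a word with no repeated symbols) and k is a natural number, then α^k (the k-fold concatenation of α with itself) is (k+1)-power-free, i.e., α^k contains no factor of the form u^(k+1) for a nonempty word u. -/
/-- `wpow u m` is the `m`-fold concatenation of the word `u` with itself. -/
def wpow {α : Type*} (u : List α) (m : ℕ) : List α := (List.replicate m u).flatten

/-- A nondeterministic finite automaton with `q` states over alphabet `α`. -/
structure MyNFA (α : Type*) (q : ℕ) where
  step : Fin q → α → Fin q → Prop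
  start : Fin q
  accept : Fin q → Prop

/-- `p` (restricted to indices `≤ w.length`) is an accepting walk of `M` reading `w`. -/
def IsAccWalk {α : Type*} {q : ℕ} (M : MyNFA α q) (w : List α) (p : ℕ → Fin q) : Prop :=
  p 0 = M.start ∧ M.accept (p w.length) ∧
    ∀ i (h : i < w.length), M.step (p i) (w.get ⟨i, h⟩) (p (i + 1))

/-- Some NFA with `q` states accepts `w`, and among all words of length `|w|`
there is exactly one accepting walk (which reads `w`). -/
def UniqueWitness {α : Type*} (q : ℕ) (w : List α) : Prop :=
  ∃ M : MyNFA α q, ∃ p, IsAccWalk M w p ∧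
    ∀ v p', List.length v = w.length → IsAccWalk M v p' →
      v = w ∧ ∀ i ≤ w.length, p' i = p i

/-- Unique-acceptance nondeterministic automatic complexity `A_N = A_Nu`. -/
noncomputable def AN {α : Type*} (w : List α) : ℕ := sInf {q | UniqueWitness q w}

/-- Some NFA with `q` states accepts `w` and accepts no other word of length `|w|`. -/
def ExactWitness {α : Type*} (q : ℕ) (w : List α) : Prop :=
  ∃ M : MyNFA α q, (∃ p, IsAccWalk M w p) ∧
    ∀ v, List.length v = w.length → (∃ p', IsAccWalk M v p') → v = w

/-- Exact-acceptance nondeterministic automatic complexity `A_Ne`. -/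
noncomputable def ANe {α : Type*} (w : List α) : ℕ := sInf {q | ExactWitness q w}

/-- Witness for the conditional automatic complexity `A_N(x ∣ y)`:
an NFA over the product alphabet such that exactly one accepting walk of
length `|y|` reads a word whose first projection is `y`, and the second
projection of that word is `x`. -/
def CondWitness {A B : Type*} (q : ℕ) (x : List A) (y : List B) : Prop :=
  ∃ M : MyNFA (B × A) q, ∃ w : List (B × A), ∃ p, IsAccWalk M w p ∧
    w.map Prod.fst = y ∧ w.map Prod.snd = x ∧
    ∀ w' p', List.length w' = y.length → IsAccWalk M w' p' →
      w'.map Prod.fst = y → (w' = w ∧ ∀ i ≤ y.length, p' i = p i)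

/-- Conditional nondeterministic automatic complexity `A_N(x ∣ y)`. -/
noncomputable def CondAN {A B : Type*} (x : List A) (y : List B) : ℕ :=
  sInf {q | CondWitness q x y}

/-- `w` contains an `m`-th power: some nonempty `u` with `u^m` a factor of `w`. -/
def ContainsPow {α : Type*} (w : List α) (m : ℕ) : Prop :=
  ∃ u : List α, u ≠ [] ∧ (wpow u m) <:+: w

/-- A word is primitive if it is nonempty and not a proper power. -/
def Primitive {α : Type*} (w : List α) : Prop :=
  w ≠ [] ∧ ∀ (u : List α) (k : ℕ), 2 ≤ k → w ≠ wpow u k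

/-- If `α` is a permutation word then `α^k` is `(k+1)`-power-free. -/
theorem stmt0 {Γ : Type*} (α : List Γ) (h : α.Nodup) (k : ℕ) :
    ¬ ContainsPow (wpow α k) (k + 1) := by
  classical
  rintro ⟨u, hu, hi⟩
  obtain ⟨a, ha⟩ := List.exists_mem_of_ne_nil u hu
  have h1 : List.count a (wpow u (k+1)) = (k+1) * List.count a u := by
    simp [wpow, List.count_flatten, List.map_replicate, List.sum_replicate, smul_eq_mul]
  have h2 : List.count a (wpow α k) = k * List.count a α := by
    simp [wpow, List.count_flatten, List.map_replicate, List.sum_replicate, smul_eq_mul]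
  have hle := hi.sublist.count_le a
  rw [h1, h2] at hle
  have hca : List.count a α ≤ 1 := List.nodup_iff_count_le_one.1 h a
  have hcu : 1 ≤ List.count a u := List.count_pos_iff.2 ha
  nlinarith
end

section
/- Let x, y, z range over a set X, let d be a metric on X, and let a : X × X → ℝ be a nonnegative symmetric function such that a(x,z) ≤ a(x,y) + d(y,z) for all x,y,z. Then the function d'(x,y) = d(x,y)/(a(x,y) + d(x,y)), with d'(x,y) = 0 when d(x,y) = 0, is a metric on X. -/
theorem stmt3 {X : Type*} (d a : X → X → ℝ)
    (d_nonneg : ∀ x y, 0 ≤ d x y) (d_eq : ∀ x y, d x y = 0 ↔ x = y)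
    (d_symm : ∀ x y, d x y = d y x) (d_tri : ∀ x y z, d x z ≤ d x y + d y z)
    (a_nonneg : ∀ x y, 0 ≤ a x y) (a_symm : ∀ x y, a x y = a y x)
    (key : ∀ x y z, a x z ≤ a x y + d y z) :
    let d' : X → X → ℝ := fun x y => if d x y = 0 then 0 else d x y / (a x y + d x y)
    (∀ x y, 0 ≤ d' x y) ∧ (∀ x y, d' x y = 0 ↔ x = y) ∧
      (∀ x y, d' x y = d' y x) ∧ (∀ x y z, d' x z ≤ d' x y + d' y z) := by
  intro d'
  have hpos : ∀ x y, d x y ≠ 0 → 0 < d x y :=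
    fun x y h => lt_of_le_of_ne (d_nonneg x y) (Ne.symm h)
  have h0 : ∀ x y, 0 ≤ d' x y := by
    intro x y
    simp only [d']
    split
    · exact le_refl 0
    · exact div_nonneg (d_nonneg x y) (add_nonneg (a_nonneg x y) (d_nonneg x y))
  refine ⟨h0, ?_, ?_, ?_⟩
  · intro x y
    simp only [d']
    split
    · rename_i h
      simp [(d_eq x y).mp h]
    · rename_i h
      have hd := hpos x y h
      have hden : 0 < a x y + d x y := add_pos_of_nonneg_of_pos (a_nonneg x y) hd
      exact iff_of_false (ne_of_gt (div_pos hd hden))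
        (fun hxy => h ((d_eq x y).mpr hxy))
  · intro x y
    simp only [d', d_symm x y, a_symm x y]
  · intro x y z
    by_cases hxz : d x z = 0
    · have : d' x z = 0 := by simp [d', hxz]
      rw [this]
      exact add_nonneg (h0 x y) (h0 y z)
    by_cases hxy : d x y = 0
    · have hexy : x = y := (d_eq x y).mp hxy
      subst hexy
      have : d' x x = 0 := by simp [d', (d_eq x x).mpr rfl]
      rw [this, zero_add]
    by_cases hyz : d y z = 0
    · have heyz : y = z := (d_eq y z).mp hyz
      subst heyz
      have : d' y y = 0 := by simp [d', (d_eq y y).mpr rfl]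
      rw [this, add_zero]
    have hdxy := hpos x y hxy
    have hdyz := hpos y z hyz
    have hdxz := hpos x z hxz
    have hD : 0 < a x z + (d x y + d y z) := by
      have := a_nonneg x z; linarith
    have hden1 : 0 < a x z + d x z := add_pos_of_nonneg_of_pos (a_nonneg x z) hdxz
    have hden2 : 0 < a x y + d x y := add_pos_of_nonneg_of_pos (a_nonneg x y) hdxy
    have hden3 : 0 < a y z + d y z := add_pos_of_nonneg_of_pos (a_nonneg y z) hdyz
    have h1 : d x z / (a x z + d x z) ≤ (d x y + d y z) / (a x z + (d x y + d y z)) := by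
      rw [div_le_div_iff₀ hden1 hD]
      nlinarith [d_tri x y z, a_nonneg x z]
    have h2 : d x y / (a x z + (d x y + d y z)) ≤ d x y / (a x y + d x y) := by
      rw [div_le_div_iff₀ hD hden2]
      nlinarith [key x z y, d_symm y z]
    have h3 : d y z / (a x z + (d x y + d y z)) ≤ d y z / (a y z + d y z) := by
      rw [div_le_div_iff₀ hD hden3]
      nlinarith [key z x y, a_symm x z, a_symm y z]
    simp only [d', if_neg hxz, if_neg hxy, if_neg hyz]
    calc d x z / (a x z + d x z) ≤ (d x y + d y z) / (a x z + (d x y + d y z)) := h1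
      _ = d x y / (a x z + (d x y + d y z)) + d y z / (a x z + (d x y + d y z)) := add_div _ _ _
      _ ≤ d x y / (a x y + d x y) + d y z / (a y z + d y z) := add_le_add h2 h3
end

section
/- For nonempty words x and y over an alphabet Σ, the following are equivalent: (1) xy = yx; (2) there exists a word z and integers k, l > 0 with x = z^k and y = z^l; (3) there exist integers i, j > 0 with x^i = y^j. -/
theorem wpow_zero {α : Type*} (u : List α) : wpow u 0 = [] := rfl

theorem wpow_succ {α : Type*} (u : List α) (m : ℕ) : wpow u (m+1) = u ++ wpow u m := by
  simp [wpow, List.replicate_succ]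

theorem wpow_one {α : Type*} (u : List α) : wpow u 1 = u := by simp [wpow]

theorem wpow_add {α : Type*} (u : List α) (m n : ℕ) :
    wpow u (m+n) = wpow u m ++ wpow u n := by
  induction m with
  | zero => simp [wpow_zero]
  | succ k ih => rw [Nat.succ_add, wpow_succ, wpow_succ, ih, List.append_assoc]

theorem wpow_mul {α : Type*} (u : List α) (m n : ℕ) :
    wpow (wpow u m) n = wpow u (m*n) := by
  induction n with
  | zero => simp [wpow_zero]
  | succ k ih =>
    have h : m*(k+1) = m + m*k := by ring
    rw [wpow_succ, ih, h, wpow_add]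

theorem wpow_shift {α : Type*} (x t : List α) (m : ℕ) :
    wpow (x ++ t) m ++ x = x ++ wpow (t ++ x) m := by
  induction m with
  | zero => simp [wpow_zero]
  | succ k ih =>
    rw [wpow_succ, wpow_succ, List.append_assoc, ih]
    simp [List.append_assoc]

theorem key1 {S : Type*} : ∀ n : ℕ, ∀ x y : List S, x.length + y.length ≤ n → x ≠ [] → y ≠ [] →
    x.length ≤ y.length → x ++ y = y ++ x →
    ∃ z k l, 0 < k ∧ 0 < l ∧ x = wpow z k ∧ y = wpow z l := by
  intro n
  induction n with
  | zero =>
    intro x y h hx _ _ _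
    have := List.length_pos_iff.mpr hx
    omega
  | succ n ih =>
    intro x y hn hx hy hle hc
    have hpre : x <+: y := by
      have h1 : x <+: y ++ x := by rw [← hc]; exact List.prefix_append x y
      exact List.prefix_of_prefix_length_le h1 (List.prefix_append y x) hle
    obtain ⟨t, rfl⟩ := hpre
    by_cases ht : t = []
    · subst ht
      exact ⟨x, 1, 1, one_pos, one_pos, (wpow_one x).symm, by simp [wpow_one]⟩
    · have hct : x ++ t = t ++ x := by
        have h2 : x ++ (x ++ t) = x ++ (t ++ x) := by
          rw [hc, List.append_assoc]
        exact List.append_cancel_left h2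
      have hxlen : 0 < x.length := List.length_pos_iff.mpr hx
      have hlen : x.length + t.length ≤ n := by
        simp only [List.length_append] at hn; omega
      rcases le_total x.length t.length with h1 | h1
      · obtain ⟨z, k, l, hk, hl, hxz, htz⟩ := ih x t hlen hx ht h1 hct
        exact ⟨z, k, k + l, hk, by omega, hxz, by rw [wpow_add, hxz, htz]⟩
      · obtain ⟨z, k, l, hk, hl, htz, hxz⟩ := ih t x (by omega) ht hx h1 hct.symm
        exact ⟨z, l, l + k, hl, by omega, hxz, by rw [wpow_add, hxz, htz]⟩

theorem key3 {S : Type*} (x y : List S) (hle : x.length ≤ y.length)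
    (i j : ℕ) (hi : 0 < i) (hj : 0 < j) (h : wpow x i = wpow y j) :
    x ++ y = y ++ x := by
  obtain ⟨i, rfl⟩ : ∃ i', i = i' + 1 := ⟨i - 1, by omega⟩
  obtain ⟨j, rfl⟩ : ∃ j', j = j' + 1 := ⟨j - 1, by omega⟩
  have hpre : x <+: y := by
    have h1 : x <+: wpow y (j+1) := by
      rw [← h, wpow_succ]; exact List.prefix_append x _
    have h2 : y <+: wpow y (j+1) := by
      rw [wpow_succ]; exact List.prefix_append y _
    exact List.prefix_of_prefix_length_le h1 h2 hle
  obtain ⟨t, rfl⟩ := hpre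
  have h1 : wpow x i = t ++ wpow (x ++ t) j := by
    have h2 : x ++ wpow x i = x ++ (t ++ wpow (x ++ t) j) := by
      rw [← wpow_succ, h, wpow_succ, List.append_assoc]
    exact List.append_cancel_left h2
  have h2 : wpow (x ++ t) (j+1) = wpow (t ++ x) (j+1) := by
    calc wpow (x ++ t) (j+1) = wpow x (i+1) := h.symm
      _ = wpow x i ++ x := by rw [wpow_add, wpow_one]
      _ = t ++ (wpow (x ++ t) j ++ x) := by rw [h1, List.append_assoc]
      _ = t ++ (x ++ wpow (t ++ x) j) := by rw [wpow_shift]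
      _ = wpow (t ++ x) (j+1) := by rw [wpow_succ, List.append_assoc]
  have h3 : x ++ t = t ++ x := by
    have h4 := congrArg (List.take (x ++ t).length) h2
    rwa [wpow_succ, wpow_succ, List.take_left,
      List.take_left' (by simp [Nat.add_comm])] at h4
  calc x ++ (x ++ t) = x ++ (t ++ x) := by rw [h3]
    _ = (x ++ t) ++ x := by rw [List.append_assoc]

/-- Lyndon–Schützenberger. -/
theorem stmt5 {S : Type*} (x y : List S) (hx : x ≠ []) (hy : y ≠ []) :
    ((x ++ y = y ++ x) ↔
      (∃ (z : List S) (k l : ℕ), 0 < k ∧ 0 < l ∧ x = wpow z k ∧ y = wpow z l)) ∧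
    ((∃ (z : List S) (k l : ℕ), 0 < k ∧ 0 < l ∧ x = wpow z k ∧ y = wpow z l) ↔
      (∃ (i j : ℕ), 0 < i ∧ 0 < j ∧ wpow x i = wpow y j)) := by
  have comm_to_pow : ∀ a b : List S, a ≠ [] → b ≠ [] → a ++ b = b ++ a →
      ∃ z k l, 0 < k ∧ 0 < l ∧ a = wpow z k ∧ b = wpow z l := by
    intro a b ha hb hc
    rcases le_total a.length b.length with h | h
    · exact key1 (a.length + b.length) a b le_rfl ha hb h hc
    · obtain ⟨z, k, l, hk, hl, h1, h2⟩ :=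
        key1 (b.length + a.length) b a le_rfl hb ha h hc.symm
      exact ⟨z, l, k, hl, hk, h2, h1⟩
  constructor
  · constructor
    · exact comm_to_pow x y hx hy
    · rintro ⟨z, k, l, hk, hl, rfl, rfl⟩
      rw [← wpow_add, ← wpow_add, Nat.add_comm]
  · constructor
    · rintro ⟨z, k, l, hk, hl, rfl, rfl⟩
      exact ⟨l, k, hl, hk, by rw [wpow_mul, wpow_mul, Nat.mul_comm]⟩
    · rintro ⟨i, j, hi, hj, hij⟩
      apply comm_to_pow x y hx hy
      rcases le_total x.length y.length with h | h
      · exact key3 x y h i j hi hj hij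
      · exact (key3 y x h j i hj hi hij.symm).symm
end

section
/- For all words x and y of the same length, max(A_N(x), A_N(y)) ≤ A_N(x # y), where x # y is the track (coordinatewise pairing) of x and y. -/
lemma uniqueWitness_succ_length {α : Type*} (w : List α) :
    UniqueWitness (w.length + 1) w := by
  set n := w.length with hn
  refine ⟨⟨fun s a t => (t : ℕ) = (s : ℕ) + 1 ∧ ∃ h : (s : ℕ) < n, a = w.get ⟨s, h⟩,
      ⟨0, Nat.succ_pos n⟩, fun s => (s : ℕ) = n⟩,
    fun i => ⟨min i n, by omega⟩, ⟨?_, ?_, ?_⟩, ?_⟩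
  · simp
  · simp; omega
  · intro i hi
    refine ⟨by simp; omega, ⟨by simp; omega, ?_⟩⟩
    congr 1
    simp; omega
  · intro v p' hv hp'
    obtain ⟨h0, hacc, hstep⟩ := hp'
    have key : ∀ i, i ≤ n → (p' i : ℕ) = i := by
      intro i
      induction i with
      | zero => intro _; rw [h0]
      | succ k ih =>
        intro hk
        have hk' : k < v.length := by omega
        have := hstep k hk'
        have := this.1
        rw [ih (by omega)] at this
        exact this
    constructor
    · refine List.ext_get (by omega) ?_
      intro i h1 h2
      have hi : i < v.length := h1
      obtain ⟨_, ⟨hlt, ha⟩⟩ := hstep i hi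
      rw [ha]
      congr 1
      exact Fin.ext (key i (by omega))
    · intro i hi
      apply Fin.ext
      rw [key i hi]
      simp; omega

lemma uniqueWitness_map {α β : Type*} {q : ℕ} (f : α → β) (w : List α)
    (hw : UniqueWitness q w) : UniqueWitness q (w.map f) := by
  obtain ⟨M, p, ⟨h0, hacc, hstep⟩, huniq⟩ := hw
  refine ⟨⟨fun s b t => ∃ a, f a = b ∧ M.step s a t, M.start, M.accept⟩, p,
    ⟨h0, by simpa using hacc, ?_⟩, ?_⟩
  · intro i hi
    have hi' : i < w.length := by simpa using hi
    exact ⟨w.get ⟨i, hi'⟩, by simp, hstep i hi'⟩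
  · intro v p' hv hp'
    obtain ⟨h0', hacc', hstep'⟩ := hp'
    have hvlen : v.length = w.length := by simpa using hv
    -- lift v to a word over α
    have hch : ∀ i : Fin v.length, ∃ a, f a = v.get i ∧ M.step (p' i) a (p' (i + 1)) :=
      fun i => hstep' i i.isLt
    choose g hg1 hg2 using hch
    set u : List α := List.ofFn g with hu
    have hulen : u.length = v.length := by simp [hu]
    have humap : u.map f = v := by
      refine List.ext_get (by simp [hulen]) ?_
      intro i h1 h2
      have h3 : i < u.length := by simpa using h1
      rw [show (u.map f).get ⟨i, h1⟩ = f (u.get ⟨i, h3⟩) by simp]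
      have : u.get ⟨i, h3⟩ = g ⟨i, h2⟩ := by simp [hu]
      rw [this, hg1]
    have hwalk : IsAccWalk M u p' := by
      refine ⟨h0', by rw [hulen, hvlen]; simpa [hvlen] using hacc', ?_⟩
      intro i hi
      have hi2 : i < v.length := by omega
      have : u.get ⟨i, hi⟩ = g ⟨i, hi2⟩ := by simp [hu]
      rw [this]
      exact hg2 ⟨i, hi2⟩
    obtain ⟨huw, hpp⟩ := huniq u p' (by omega) hwalk
    constructor
    · rw [← humap, huw]
    · intro i hi
      exact hpp i (by simpa using hi)

theorem stmt9 {Γ Δ : Type*} (x : List Γ) (y : List Δ) (h : x.length = y.length) :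
    max (AN x) (AN y) ≤ AN (x.zip y) := by
  have hne : {q | UniqueWitness q (x.zip y)}.Nonempty :=
    ⟨(x.zip y).length + 1, uniqueWitness_succ_length _⟩
  have hmem : UniqueWitness (AN (x.zip y)) (x.zip y) := Nat.sInf_mem hne
  have hx : (x.zip y).map Prod.fst = x := List.map_fst_zip h.le
  have hy : (x.zip y).map Prod.snd = y := List.map_snd_zip h.ge
  have h1 : AN x ≤ AN (x.zip y) := by
    have := uniqueWitness_map Prod.fst _ hmem
    rw [hx] at this
    exact Nat.sInf_le this
  have h2 : AN y ≤ AN (x.zip y) := by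
    have := uniqueWitness_map Prod.snd _ hmem
    rw [hy] at this
    exact Nat.sInf_le this
  exact max_le h1 h2
end

section
/- The conditional nondeterministic automatic complexity satisfies the relativized chain inequality A_N(x | z) ≤ A_N(y | z) · A_N(x | y # z) for all words x, y, z of the same length. -/
lemma map_getElem_eq {α β : Type*} {f : α → β} {w : List α} {v : List β} (h : w.map f = v)
    (i : ℕ) (hi : i < w.length) :
    f (w[i]) = v[i]'(by rw [← h, List.length_map]; exact hi) := by
  subst h; simp

lemma cond_chain {A B C : Type*} {x : List A} {y : List B} {z : List C}
    (hx : x.length = z.length) (hy : y.length = z.length)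
    {q1 q2 : ℕ} (h1 : CondWitness q1 y z) (h2 : CondWitness q2 x (y.zip z)) :
    CondWitness (q1 * q2) x z := by
  obtain ⟨M1, w1, p1, ⟨hs1, ha1, hst1⟩, hf1, hsn1, hu1⟩ := h1
  obtain ⟨M2, w2, p2, ⟨hs2, ha2, hst2⟩, hf2, hsn2, hu2⟩ := h2
  have hyzl : (y.zip z).length = z.length := by simp [List.length_zip, hy]
  have hzxl : (z.zip x).length = z.length := by simp [List.length_zip, hx]
  have hw1 : w1.length = z.length := by
    have := congrArg List.length hf1; simpa using this
  have hw2 : w2.length = z.length := by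
    have := congrArg List.length hf2; simpa [hyzl] using this
  -- entry facts
  have e1 : ∀ i (hi : i < z.length), (w1[i]'(by omega)).1 = z[i]'hi := by
    intro i hi; exact map_getElem_eq hf1 i (by omega)
  have e2 : ∀ i (hi : i < z.length), (w1[i]'(by omega)).2 = y[i]'(by omega) := by
    intro i hi; exact map_getElem_eq hsn1 i (by omega)
  have f1 : ∀ i (hi : i < z.length),
      (w2[i]'(by omega)).1 = (y[i]'(by omega), z[i]'hi) := by
    intro i hi
    have := map_getElem_eq hf2 i (by omega)
    rw [this]; exact List.getElem_zip ..
  have f2 : ∀ i (hi : i < z.length), (w2[i]'(by omega)).2 = x[i]'(by omega) := by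
    intro i hi; exact map_getElem_eq hsn2 i (by omega)
  set e := (finProdFinEquiv : Fin q1 × Fin q2 ≃ Fin (q1 * q2)) with he
  refine ⟨⟨fun s l t => ∃ b : B,
      M1.step (e.symm s).1 (l.1, b) (e.symm t).1 ∧
      M2.step (e.symm s).2 ((b, l.1), l.2) (e.symm t).2,
      e (M1.start, M2.start),
      fun s => M1.accept (e.symm s).1 ∧ M2.accept (e.symm s).2⟩,
    z.zip x, fun i => e (p1 i, p2 i), ⟨?_, ?_, ?_⟩, ?_, ?_, ?_⟩
  · simp [hs1, hs2]
  · rw [hw1] at ha1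
    rw [hw2] at ha2
    rw [hzxl]
    exact ⟨by simpa using ha1, by simpa using ha2⟩
  · intro i hi
    have hi' : i < z.length := by omega
    refine ⟨y[i]'(by omega), ?_, ?_⟩
    · have hg : w1[i]'(by omega) = (z[i]'hi', y[i]'(by omega)) :=
        Prod.ext (e1 i hi') (e2 i hi')
      have hst := hst1 i (by omega)
      simp only [List.get_eq_getElem] at hst
      rw [hg] at hst
      simpa [List.getElem_zip] using hst
    · have hg : w2[i]'(by omega) = ((y[i]'(by omega), z[i]'hi'), x[i]'(by omega)) :=
        Prod.ext (f1 i hi') (f2 i hi')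
      have hst := hst2 i (by omega)
      simp only [List.get_eq_getElem] at hst
      rw [hg] at hst
      simpa [List.getElem_zip] using hst
  · exact List.map_fst_zip (by omega)
  · exact List.map_snd_zip (by omega)
  · intro w' p' hlen' hwalk' hfst'
    obtain ⟨hp0', hacc', hstep'⟩ := hwalk'
    have hfz : ∀ i (hi : i < z.length), (w'[i]'(by omega)).1 = z[i]'hi := by
      intro i hi; exact map_getElem_eq hfst' i (by omega)
    have hexF : ∀ i : Fin z.length, ∃ b : B,
        M1.step ((e.symm (p' i)).1) ((w'[(i:ℕ)]'(by omega)).1, b) ((e.symm (p' (i+1))).1) ∧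
        M2.step ((e.symm (p' i)).2)
          ((b, (w'[(i:ℕ)]'(by omega)).1), (w'[(i:ℕ)]'(by omega)).2)
          ((e.symm (p' (i+1))).2) := by
      intro i
      have := hstep' i (by omega)
      simpa [List.get_eq_getElem] using this
    choose b hb1 hb2 using hexF
    -- the walk for M1
    have walk1 : IsAccWalk M1 (List.ofFn (fun i : Fin z.length => (z[(i:ℕ)], b i)))
        (fun i => (e.symm (p' i)).1) := by
      refine ⟨by show (e.symm (p' 0)).1 = M1.start; rw [hp0']; simp, ?_, ?_⟩
      · have hacc2 : M1.accept ((e.symm (p' z.length)).1) ∧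
            M2.accept ((e.symm (p' z.length)).2) := by
          rw [hlen'] at hacc'; exact hacc'
        simpa [List.length_ofFn] using hacc2.1
      · intro i hi
        have hi' : i < z.length := by simpa [List.length_ofFn] using hi
        have hst := hb1 ⟨i, hi'⟩
        rw [hfz i hi'] at hst
        simpa [List.get_eq_getElem, List.getElem_ofFn] using hst
    obtain ⟨hw1eq, hp1eq⟩ := hu1 _ _ (by simp [List.length_ofFn, hy]) walk1
      (by simp [List.map_ofFn, Function.comp_def])
    have hbval : ∀ i : Fin z.length, b i = y[(i:ℕ)]'(by omega) := by
      intro i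
      have h' := List.getElem_of_eq hw1eq
        (show (i:ℕ) < (List.ofFn (fun i : Fin z.length => (z[(i:ℕ)], b i))).length by
          simp [List.length_ofFn])
      have h2 := congrArg Prod.snd h'
      simp only [List.getElem_ofFn, Fin.eta] at h2
      exact h2.trans (e2 i i.isLt)
    -- the walk for M2
    have walk2 : IsAccWalk M2
        (List.ofFn (fun i : Fin z.length => ((b i, z[(i:ℕ)]), (w'[(i:ℕ)]'(by omega)).2)))
        (fun i => (e.symm (p' i)).2) := by
      refine ⟨by show (e.symm (p' 0)).2 = M2.start; rw [hp0']; simp, ?_, ?_⟩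
      · have hacc2 : M1.accept ((e.symm (p' z.length)).1) ∧
            M2.accept ((e.symm (p' z.length)).2) := by
          rw [hlen'] at hacc'; exact hacc'
        simpa [List.length_ofFn] using hacc2.2
      · intro i hi
        have hi' : i < z.length := by simpa [List.length_ofFn] using hi
        have hst := hb2 ⟨i, hi'⟩
        rw [hfz i hi'] at hst
        simpa [List.get_eq_getElem, List.getElem_ofFn] using hst
    obtain ⟨hw2eq, hp2eq⟩ := hu2 _ _ (by simp [List.length_ofFn, hyzl]) walk2
      (by
        apply List.ext_getElem (by simp [List.length_ofFn, hyzl])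
        intro i h1 h2
        simp [List.getElem_map, List.getElem_ofFn, List.getElem_zip, hbval])
    constructor
    · apply List.ext_getElem (by simp [hzxl, hlen'])
      intro i h1 h2
      have hi' : i < z.length := by omega
      have hA := hfz i hi'
      have h' := List.getElem_of_eq hw2eq
        (show i < (List.ofFn (fun i : Fin z.length =>
            ((b i, z[(i:ℕ)]), (w'[(i:ℕ)]'(by omega)).2))).length by
          simp [List.length_ofFn]; omega)
      have hB := congrArg Prod.snd h'
      simp only [List.getElem_ofFn] at hB
      have hB' : (w'[i]'h1).2 = x[i]'(by omega) := hB.trans (f2 i hi')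
      rw [List.getElem_zip]
      exact Prod.ext hA hB'
    · intro i hi
      have hA := hp1eq i (by omega)
      have hB := hp2eq i (by omega)
      have hsymm : e.symm (p' i) = (p1 i, p2 i) := Prod.ext hA hB
      calc p' i = e (e.symm (p' i)) := (e.apply_symm_apply _).symm
        _ = e (p1 i, p2 i) := by rw [hsymm]

lemma cond_witness_basic {A B : Type*} (x : List A) (y : List B) (h : x.length = y.length) :
    CondWitness (y.length + 1) x y := by
  refine ⟨⟨fun s l t => ∃ hs : (s : ℕ) < y.length,
      l = (y[(s:ℕ)]'hs, x[(s:ℕ)]'(by omega)) ∧ (t : ℕ) = (s : ℕ) + 1,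
      ⟨0, Nat.succ_pos _⟩, fun s => (s : ℕ) = y.length⟩,
    y.zip x, fun i => ⟨min i y.length, by omega⟩, ⟨?_, ?_, ?_⟩, ?_⟩
  · simp
  · simp [List.length_zip, ← h]
  · intro i hi
    have hi' : i < y.length := by simp [List.length_zip] at hi; omega
    refine ⟨by simp; omega, ?_, by simp; omega⟩
    simp [Nat.min_eq_left hi'.le, Nat.min_eq_left (Nat.succ_le_of_lt hi'),
      List.get_eq_getElem, List.getElem_zip]
  · refine ⟨?_, ?_, ?_⟩
    · apply List.ext_getElem (by simp [List.length_zip, ← h])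
      intro i h1 h2
      simp [List.getElem_zip]
    · apply List.ext_getElem (by simp [List.length_zip, ← h])
      intro i h1 h2
      simp [List.getElem_zip]
    · intro w' p' hlen ⟨hp0, hacc, hstep⟩ _
      have key : ∀ i, i ≤ y.length → (p' i : ℕ) = i := by
        intro i
        induction i with
        | zero => intro _; rw [hp0]
        | succ i ih =>
          intro hi
          have h1 := ih (by omega)
          obtain ⟨hs, -, ht⟩ := hstep i (by omega)
          omega
      constructor
      · apply List.ext_getElem (by simp [List.length_zip, hlen, ← h])
        intro i h1 h2
        have hi : i < y.length := by omega
        obtain ⟨hs, heq, -⟩ := hstep i h1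
        have hpi := key i hi.le
        simp only [List.get_eq_getElem] at heq
        simp only [hpi] at heq
        simp [heq, List.getElem_zip]
      · intro i hi
        have := key i hi
        exact Fin.ext (by simp; omega)

theorem stmt11 {A B C : Type*} (x : List A) (y : List B) (z : List C)
    (hxy : x.length = y.length) (hyz : y.length = z.length) :
    CondAN x z ≤ CondAN y z * CondAN x (y.zip z) := by
  have hx : x.length = z.length := hxy.trans hyz
  have hne1 : {q | CondWitness q y z}.Nonempty :=
    ⟨z.length + 1, cond_witness_basic y z hyz⟩
  have hne2 : {q | CondWitness q x (y.zip z)}.Nonempty :=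
    ⟨(y.zip z).length + 1, cond_witness_basic x (y.zip z)
      (by simp [List.length_zip]; omega)⟩
  have m1 : CondWitness (CondAN y z) y z := Nat.sInf_mem hne1
  have m2 : CondWitness (CondAN x (y.zip z)) x (y.zip z) := Nat.sInf_mem hne2
  exact Nat.sInf_le (cond_chain hx hyz m1 m2)
end

section
/- There exist binary words x and y of the same length with A_N(x # y) > A_N(x) + A_N(y); specifically x = (010)^4 and y = (01)^6 satisfy A_N(x#y) = 6, A_N(x) = 3, A_N(y) = 2. -/
namespace Stmt12Aux

variable {α : Type*}

/-! ### Upper bounds: deterministic cycle automata -/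

def cwalk {q : ℕ} (f : Fin q → α × Fin q) (s0 : Fin q) : ℕ → Fin q
  | 0 => s0
  | t + 1 => (f (cwalk f s0 t)).2

def cword {q : ℕ} (f : Fin q → α × Fin q) (s0 : Fin q) (n : ℕ) : List α :=
  List.ofFn (fun t : Fin n => (f (cwalk f s0 t)).1)

lemma cycle_unique {q n : ℕ} (f : Fin q → α × Fin q) (s0 : Fin q) :
    UniqueWitness q (cword f s0 n) := by
  have hlen : (cword f s0 n).length = n := List.length_ofFn
  refine ⟨⟨fun a c b => f a = (c, b), s0, fun s => s = cwalk f s0 n⟩, cwalk f s0,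
    ⟨rfl, ?_, ?_⟩, ?_⟩
  · rw [hlen]
  · intro t h
    show f _ = _
    have : (cword f s0 n).get ⟨t, h⟩ = (f (cwalk f s0 t)).1 := by
      simp [cword, List.get_ofFn]
    rw [this]
    exact Prod.mk.eta.symm
  · intro v p' hvlen hw
    have hvn : v.length = n := by rw [hvlen, hlen]
    have key : ∀ t, t ≤ n → p' t = cwalk f s0 t ∧
        ∀ (h : t < n), v.get ⟨t, by omega⟩ = (f (cwalk f s0 t)).1 := by
      intro t ht
      induction t with
      | zero =>
        refine ⟨hw.1, ?_⟩
        intro h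
        have hst := hw.2.2 0 (by omega)
        have h0 : p' 0 = cwalk f s0 0 := hw.1
        rw [h0] at hst
        exact (congrArg Prod.fst hst).symm
      | succ t ih =>
        have ht' : t ≤ n := by omega
        obtain ⟨ihp, _⟩ := ih ht'
        have hst := hw.2.2 t (by omega)
        rw [ihp] at hst
        have hsnd : p' (t + 1) = (f (cwalk f s0 t)).2 := (congrArg Prod.snd hst).symm
        refine ⟨hsnd, ?_⟩
        intro h
        have hst2 := hw.2.2 (t+1) (by omega)
        rw [hsnd] at hst2
        exact (congrArg Prod.fst hst2).symm
    constructor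
    · refine List.ext_get (by rw [hvn, hlen]) ?_
      intro t h1 h2
      have h3 : t < n := by omega
      have := (key t (by omega)).2 h3
      rw [this]
      simp [cword, List.get_ofFn]
    · intro t ht
      rw [hlen] at ht
      exact (key t ht).1

/-! ### The swap lemma -/

def σf (i a b t : ℕ) : ℕ :=
  if t < i then t else if t < i + b then t + a else if t < i + b + a then t - b else t

set_option linter.unnecessarySeqFocus false in
lemma swap_main {q : ℕ} (M : MyNFA α q) (w : List α) (p : ℕ → Fin q)
    (hacc : IsAccWalk M w p)
    (hU : ∀ v p', List.length v = w.length → IsAccWalk M v p' →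
      v = w ∧ ∀ t ≤ w.length, p' t = p t)
    (i a b : ℕ) (ha : 1 ≤ a) (hb : 1 ≤ b) (hk : i + a + b ≤ w.length)
    (hij : p i = p (i + a)) (hik : p i = p (i + a + b)) (d : α) :
    (∀ r, r < b → w.getD (i + r) d = w.getD (i + a + r) d) ∧
    (∀ r, r < a → w.getD (i + r) d = w.getD (i + b + r) d) := by
  set n := w.length with hn
  have hσlt : ∀ t, t < n → σf i a b t < n := by
    intro t ht; unfold σf; split_ifs <;> omega
  have hσ1 : ∀ t, t < i → σf i a b t = t := by
    intro t h; unfold σf; split_ifs <;> omega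
  have hσ2 : ∀ t, i ≤ t → t < i + b → σf i a b t = t + a := by
    intro t h h'; unfold σf; split_ifs <;> omega
  have hσ3 : ∀ t, i + b ≤ t → t < i + b + a → σf i a b t = t - b := by
    intro t h h'; unfold σf; split_ifs <;> omega
  have hσ4 : ∀ t, i + b + a ≤ t → σf i a b t = t := by
    intro t h; unfold σf; split_ifs <;> omega
  have hab : p (i + a) = p (i + a + b) := hij.symm.trans hik
  have key : ∀ t, p (σf i a b (t+1)) = p (σf i a b t + 1) := by
    intro t
    by_cases c1 : t + 1 < i
    · rw [hσ1 _ c1, hσ1 _ (by omega)]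
    · by_cases c2 : t + 1 = i
      · have e1 : σf i a b (t+1) = i + a := by rw [c2]; exact hσ2 i le_rfl (by omega)
        have e2 : σf i a b t = t := hσ1 t (by omega)
        rw [e1, e2, c2]
        exact hij.symm
      · by_cases c3 : t < i
        · omega
        · by_cases c4 : t + 1 < i + b
          · rw [hσ2 (t+1) (by omega) c4, hσ2 t (by omega) (by omega)]
            have : t + 1 + a = t + a + 1 := by omega
            rw [this]
          · by_cases c5 : t + 1 = i + b
            · rw [c5, hσ3 (i+b) le_rfl (by omega), hσ2 t (by omega) (by omega)]
              have e1 : i + b - b = i := by omega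
              have e2 : t + a + 1 = i + a + b := by omega
              rw [e1, e2]; exact hik
            · by_cases c6 : t < i + b
              · omega
              · by_cases c7 : t + 1 < i + b + a
                · rw [hσ3 (t+1) (by omega) c7, hσ3 t (by omega) (by omega)]
                  have : t + 1 - b = t - b + 1 := by omega
                  rw [this]
                · by_cases c8 : t + 1 = i + b + a
                  · rw [c8, hσ4 _ le_rfl, hσ3 t (by omega) (by omega)]
                    have e1 : t - b + 1 = i + a := by omega
                    have e2 : i + b + a = i + a + b := by omega
                    rw [e1, e2]; exact hab.symm
                  · rw [hσ4 (t+1) (by omega), hσ4 t (by omega)]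
  set v : List α := List.ofFn (fun t : Fin n => w.get ⟨σf i a b t.1, hσlt t.1 t.2⟩) with hv
  have hvlen : v.length = n := List.length_ofFn
  have hvget : ∀ t (ht : t < n), v.getD t d = w.getD (σf i a b t) d := by
    intro t ht
    rw [List.getD_eq_getElem v d (by omega), List.getD_eq_getElem w d (hσlt t ht)]
    simp only [hv, List.getElem_ofFn]
    rfl
  have hwalk : IsAccWalk M v (fun t => p (σf i a b t)) := by
    refine ⟨?_, ?_, ?_⟩
    · show p (σf i a b 0) = M.start
      have h0 : p (σf i a b 0) = p 0 := by
        by_cases hi : 0 < i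
        · rw [hσ1 0 hi]
        · have hi0 : i = 0 := by omega
          rw [hσ2 0 (by omega) (by omega)]
          subst hi0
          exact hij.symm
      rw [h0]; exact hacc.1
    · show M.accept (p (σf i a b v.length))
      rw [hvlen, hσ4 n (by omega)]
      exact hacc.2.1
    · intro t ht
      have htn : t < n := by rw [hvlen] at ht; exact ht
      show M.step (p (σf i a b t)) (v.get ⟨t, ht⟩) (p (σf i a b (t+1)))
      have hg : v.get ⟨t, ht⟩ = w.get ⟨σf i a b t, hσlt t htn⟩ := by
        have h1 : v.get ⟨t, ht⟩ = v.getD t d := by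
          rw [List.getD_eq_getElem v d ht]; rfl
        have h2 : w.get ⟨σf i a b t, hσlt t htn⟩ = w.getD (σf i a b t) d := by
          rw [List.getD_eq_getElem w d (hσlt t htn)]; rfl
        rw [h1, h2, hvget t htn]
      rw [hg, key t]
      exact hacc.2.2 (σf i a b t) (hσlt t htn)
  obtain ⟨hveq, _⟩ := hU v (fun t => p (σf i a b t)) (by rw [hvlen]) hwalk
  have hwget : ∀ t, t < n → w.getD t d = w.getD (σf i a b t) d := by
    intro t ht
    rw [← hvget t ht, hveq]
  constructor
  · intro r hr
    have h1 := hwget (i + r) (by omega)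
    rw [hσ2 (i+r) (by omega) (by omega)] at h1
    have : i + r + a = i + a + r := by omega
    rw [this] at h1
    exact h1
  · intro r hr
    have h1 := hwget (i + b + r) (by omega)
    rw [hσ3 (i+b+r) (by omega) (by omega)] at h1
    have : i + b + r - b = i + r := by omega
    rw [this] at h1
    exact h1.symm

lemma swap_triple {q : ℕ} (M : MyNFA α q) (w : List α) (p : ℕ → Fin q)
    (hacc : IsAccWalk M w p)
    (hU : ∀ v p', List.length v = w.length → IsAccWalk M v p' →
      v = w ∧ ∀ t ≤ w.length, p' t = p t)
    (i j k : ℕ) (hij : i < j) (hjk : j < k) (hk : k ≤ w.length)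
    (h1 : p i = p j) (h2 : p i = p k) (d : α) :
    (∀ r, r < k - j → w.getD (i + r) d = w.getD (j + r) d) ∧
    (∀ r, r < j - i → w.getD (i + r) d = w.getD (i + (k - j) + r) d) := by
  have h1' : p i = p (i + (j - i)) := by rw [show i + (j - i) = j by omega]; exact h1
  have h2' : p i = p (i + (j - i) + (k - j)) := by
    rw [show i + (j - i) + (k - j) = k by omega]; exact h2
  obtain ⟨hC1, hC2⟩ := swap_main M w p hacc hU i (j - i) (k - j)
    (by omega) (by omega) (by omega) h1' h2' d
  constructor
  · intro r hr
    have := hC1 r hr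
    rwa [show i + (j - i) + r = j + r by omega] at this
  · exact hC2

/-! ### Concrete words and decidable facts -/

def Xw : List (Fin 2) := [0,1,0,0,1,0,0,1,0,0,1,0]
def Yw : List (Fin 2) := [0,1,0,1,0,1,0,1,0,1,0,1]
def Zw : List (Fin 2 × Fin 2) :=
  [(0,0),(1,1),(0,0),(0,1),(1,0),(0,1),(0,0),(1,1),(0,0),(0,1),(1,0),(0,1)]

set_option maxRecDepth 100000 in
lemma zipkey_fin : ∀ i : Fin 13, ∀ j : Fin 13, ∀ k : Fin 13,
    (i.1 < j.1 ∧ j.1 < k.1 ∧ k.1 ≤ 12 ∧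
      (∀ r : Fin 12, r.1 < k.1 - j.1 → Zw.getD (i.1+r.1) (0,0) = Zw.getD (j.1+r.1) (0,0)) ∧
      (∀ r : Fin 12, r.1 < j.1 - i.1 →
        Zw.getD (i.1+r.1) (0,0) = Zw.getD (i.1+(k.1-j.1)+r.1) (0,0))) →
    i.1 = 0 ∧ j.1 = 6 ∧ k.1 = 12 := by decide

lemma zipkey (i j k : ℕ) (hij : i < j) (hjk : j < k) (h12 : k ≤ 12)
    (h1 : ∀ r, r < k - j → Zw.getD (i+r) (0,0) = Zw.getD (j+r) (0,0))
    (h2 : ∀ r, r < j - i → Zw.getD (i+r) (0,0) = Zw.getD (i+(k-j)+r) (0,0)) :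
    i = 0 ∧ j = 6 ∧ k = 12 :=
  zipkey_fin ⟨i, by omega⟩ ⟨j, by omega⟩ ⟨k, by omega⟩
    ⟨hij, hjk, h12, fun r hr => h1 r.1 hr, fun r hr => h2 r.1 hr⟩

lemma xkey1_fin : ∀ t : Fin 10,
    ¬(Xw.getD t.1 0 = Xw.getD (t.1+1) 0 ∧ Xw.getD (t.1+1) 0 = Xw.getD (t.1+2) 0) := by decide

lemma xkey1 (t : ℕ) (ht : t < 10) :
    ¬(Xw.getD t 0 = Xw.getD (t+1) 0 ∧ Xw.getD (t+1) 0 = Xw.getD (t+2) 0) :=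
  xkey1_fin ⟨t, ht⟩

lemma xkey2 : Xw.getD 1 0 ≠ Xw.getD 3 0 := by decide

lemma ykey : Yw.getD 0 0 ≠ Yw.getD 1 0 := by decide

/-! ### Finset helpers -/

lemma two_of_card {S : Finset ℕ} (h : 2 ≤ S.card) :
    ∃ i j, i ∈ S ∧ j ∈ S ∧ i < j := by
  obtain ⟨a, ha, b, hb, hab⟩ := (Finset.one_lt_card (s := S)).mp (by omega)
  rcases lt_or_gt_of_ne hab with h | h
  · exact ⟨a, b, ha, hb, h⟩
  · exact ⟨b, a, hb, ha, h⟩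

lemma three_of_card {S : Finset ℕ} (h : 3 ≤ S.card) :
    ∃ i j k, i ∈ S ∧ j ∈ S ∧ k ∈ S ∧ i < j ∧ j < k := by
  obtain ⟨T, hTS, hT⟩ := S.exists_subset_card_eq (n := 3) h
  let e := T.orderIsoOfFin hT
  have hmono : StrictMono (fun t : Fin 3 => (e t : ℕ)) := fun a b hab => by
    exact_mod_cast e.strictMono hab
  exact ⟨(e 0 : ℕ), (e 1 : ℕ), (e 2 : ℕ), hTS (e 0).2, hTS (e 1).2, hTS (e 2).2,
    hmono (by decide), hmono (by decide)⟩

end Stmt12Aux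

namespace Stmt12Aux

/-! ### Lower bounds -/

lemma y_lower (q : ℕ) (hq : q ≤ 1) (hW : UniqueWitness q Yw) : False := by
  obtain ⟨M, p, hacc, hU⟩ := hW
  have hq0 : 0 < q := M.start.pos
  have hq1 : q = 1 := by omega
  subst hq1
  have h1 : p 0 = p 1 := Subsingleton.elim _ _
  have h2 : p 0 = p 2 := Subsingleton.elim _ _
  have hlen : Yw.length = 12 := rfl
  obtain ⟨hC1, -⟩ := swap_triple M Yw p hacc hU 0 1 2 (by omega) (by omega)
    (by rw [hlen]; omega) h1 h2 0
  have h := hC1 0 (by omega)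
  exact ykey (by simpa using h)

lemma x_lower (q : ℕ) (hq : q ≤ 2) (hW : UniqueWitness q Xw) : False := by
  classical
  obtain ⟨M, p, hacc, hU⟩ := hW
  have hq0 : 0 < q := M.start.pos
  have hlen : Xw.length = 12 := rfl
  obtain ⟨s, -, hs⟩ := Finset.exists_lt_card_fiber_of_mul_lt_card_of_maps_to
    (s := Finset.range 13) (t := (Finset.univ : Finset (Fin q))) (f := p) (n := 6)
    (fun a _ => Finset.mem_univ _)
    (by rw [Finset.card_univ, Fintype.card_fin, Finset.card_range]; omega)
  set S := (Finset.range 13).filter (fun t => p t = s) with hS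
  have hmem : ∀ t ∈ S, t ≤ 12 ∧ p t = s := by
    intro t ht
    rw [hS, Finset.mem_filter, Finset.mem_range] at ht
    exact ⟨by omega, ht.2⟩
  have hcard : 7 ≤ S.card := hs
  have noadj : ∀ i, i ∈ S → i + 1 ∈ S → False := by
    intro i hi hi1
    have hne : S.Nonempty := ⟨i, hi⟩
    have hminS := S.min'_mem hne
    have hmaxS := S.max'_mem hne
    have hmin_le : S.min' hne ≤ i := S.min'_le i hi
    have hle_max : i + 1 ≤ S.max' hne := S.le_max' (i+1) hi1
    have hspan : 6 ≤ S.max' hne - S.min' hne := by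
      have hsub : S ⊆ Finset.Icc (S.min' hne) (S.max' hne) := by
        intro t ht
        exact Finset.mem_Icc.mpr ⟨S.min'_le t ht, S.le_max' t ht⟩
      have := Finset.card_le_card hsub
      rw [Nat.card_Icc] at this
      omega
    by_cases hcase : i + 3 ≤ S.max' hne
    · obtain ⟨hC1, -⟩ := swap_triple M Xw p hacc hU i (i+1) (S.max' hne)
        (by omega) (by omega) (by rw [hlen]; exact (hmem _ hmaxS).1)
        ((hmem _ hi).2.trans (hmem _ hi1).2.symm)
        ((hmem _ hi).2.trans (hmem _ hmaxS).2.symm) 0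
      have h0 := hC1 0 (by omega)
      have h1 := hC1 1 (by omega)
      have hi9 : i ≤ 9 := by have := (hmem _ hmaxS).1; omega
      refine xkey1 i (by omega) ⟨?_, ?_⟩
      · simpa using h0
      · rw [show i + 1 + 1 = i + 2 by omega] at h1
        simpa using h1
    · by_cases hcase2 : S.min' hne + 3 ≤ i
      · obtain ⟨-, hC2⟩ := swap_triple M Xw p hacc hU (S.min' hne) i (i+1)
          (by omega) (by omega) (by rw [hlen]; exact (hmem _ hi1).1)
          ((hmem _ hminS).2.trans (hmem _ hi).2.symm)
          ((hmem _ hminS).2.trans (hmem _ hi1).2.symm) 0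
        rw [show i + 1 - i = 1 by omega] at hC2
        have h0 := hC2 0 (by omega)
        have h1 := hC2 1 (by omega)
        have hm9 : S.min' hne ≤ 9 := by have := (hmem _ hi).1; omega
        refine xkey1 (S.min' hne) (by omega) ⟨?_, ?_⟩
        · simpa using h0
        · rw [show S.min' hne + 1 + 1 = S.min' hne + 2 by omega] at h1
          simpa using h1
      · omega
  obtain ⟨T, hTS, hT⟩ := S.exists_subset_card_eq (n := 7) (by omega)
  let e := T.orderIsoOfFin hT
  have heS : ∀ t : Fin 7, (e t : ℕ) ∈ S := fun t => hTS (e t).2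
  have hgap : ∀ (a b : Fin 7), a < b → (e a : ℕ) + 2 ≤ (e b : ℕ) := by
    intro a b hab
    have h1 : (e a : ℕ) < (e b : ℕ) := by exact_mod_cast e.strictMono hab
    by_cases h2 : (e b : ℕ) = (e a : ℕ) + 1
    · exfalso
      have hc := heS b
      rw [h2] at hc
      exact noadj _ (heS a) hc
    · omega
  have h12' : (e 6 : ℕ) ≤ 12 := (hmem _ (heS 6)).1
  have g01 := hgap 0 1 (by decide)
  have g12 := hgap 1 2 (by decide)
  have g23 := hgap 2 3 (by decide)
  have g34 := hgap 3 4 (by decide)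
  have g45 := hgap 4 5 (by decide)
  have g56 := hgap 5 6 (by decide)
  have he0 : (e 0 : ℕ) = 0 := by omega
  have he1 : (e 1 : ℕ) = 2 := by omega
  have he2 : (e 2 : ℕ) = 4 := by omega
  have hp0 : p 0 = s := by rw [← he0]; exact (hmem _ (heS 0)).2
  have hp2 : p 2 = s := by rw [← he1]; exact (hmem _ (heS 1)).2
  have hp4 : p 4 = s := by rw [← he2]; exact (hmem _ (heS 2)).2
  obtain ⟨hC1, -⟩ := swap_triple M Xw p hacc hU 0 2 4 (by omega) (by omega)
    (by rw [hlen]; omega) (hp0.trans hp2.symm) (hp0.trans hp4.symm) 0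
  have h := hC1 1 (by omega)
  exact xkey2 (by simpa using h)

lemma zip_lower (q : ℕ) (hq : q ≤ 5) (hW : UniqueWitness q Zw) : False := by
  classical
  obtain ⟨M, p, hacc, hU⟩ := hW
  have hq0 : 0 < q := M.start.pos
  have hlen : Zw.length = 12 := rfl
  have htrip : ∀ i j k, i < j → j < k → k ≤ 12 → p i = p j → p i = p k →
      i = 0 ∧ j = 6 ∧ k = 12 := by
    intro i j k hij hjk hk h1 h2
    obtain ⟨hC1, hC2⟩ := swap_triple M Zw p hacc hU i j k hij hjk (by rw [hlen]; exact hk)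
      h1 h2 (0,0)
    exact zipkey i j k hij hjk hk hC1 hC2
  set T : Finset ℕ := (Finset.range 13).filter (fun t => ¬(t = 0 ∨ t = 6 ∨ t = 12)) with hTdef
  have hTcard : T.card = 10 := by rw [hTdef]; decide
  have hmemT : ∀ t ∈ T, t ≤ 12 ∧ t ≠ 0 ∧ t ≠ 6 ∧ t ≠ 12 := by
    intro t ht
    rw [hTdef, Finset.mem_filter, Finset.mem_range] at ht
    have h2 := ht.2
    exact ⟨by omega, by omega, by omega, by omega⟩
  have hsum := Finset.card_eq_sum_card_fiberwise
    (f := p) (s := T) (t := (Finset.univ : Finset (Fin q))) (fun a _ => Finset.mem_univ _)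
  have hfib : ∀ s : Fin q, (T.filter (fun t => p t = s)).card ≤ 2 := by
    intro s
    by_contra hc
    push_neg at hc
    obtain ⟨i, j, k, hi, hj, hk, hij, hjk⟩ :=
      three_of_card (S := T.filter (fun t => p t = s)) (by omega)
    rw [Finset.mem_filter] at hi hj hk
    have h := htrip i j k hij hjk (hmemT k hk.1).1 (hi.2.trans hj.2.symm) (hi.2.trans hk.2.symm)
    exact (hmemT i hi.1).2.1 h.1
  have hfib0 : (T.filter (fun t => p t = p 0)).card ≤ 1 := by
    by_contra hc
    push_neg at hc
    obtain ⟨i, j, hi, hj, hij⟩ :=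
      two_of_card (S := T.filter (fun t => p t = p 0)) (by omega)
    rw [Finset.mem_filter] at hi hj
    have h0i : (0:ℕ) < i := by
      have := (hmemT i hi.1).2.1
      omega
    have h := htrip 0 i j h0i hij (hmemT j hj.1).1 hi.2.symm hj.2.symm
    exact (hmemT i hi.1).2.2.1 h.2.1
  rw [← Finset.add_sum_erase _ _ (Finset.mem_univ (p 0))] at hsum
  have hrest : ∑ s ∈ (Finset.univ.erase (p 0)), (T.filter (fun t => p t = s)).card
      ≤ ((Finset.univ : Finset (Fin q)).erase (p 0)).card * 2 := by
    have := Finset.sum_le_card_nsmul ((Finset.univ : Finset (Fin q)).erase (p 0))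
      (fun s => (T.filter (fun t => p t = s)).card) 2 (fun s _ => hfib s)
    simpa [smul_eq_mul] using this
  have hec : ((Finset.univ : Finset (Fin q)).erase (p 0)).card = q - 1 := by
    rw [Finset.card_erase_of_mem (Finset.mem_univ _), Finset.card_univ, Fintype.card_fin]
  rw [hec] at hrest
  rw [hTcard] at hsum
  omega

/-! ### Upper bound witnesses -/

def f2 : Fin 2 → (Fin 2) × Fin 2 := ![(0, 1), (1, 0)]
def f3 : Fin 3 → (Fin 2) × Fin 3 := ![(0, 1), (1, 2), (0, 0)]
def f6 : Fin 6 → (Fin 2 × Fin 2) × Fin 6 :=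
  ![((0,0), 1), ((1,1), 2), ((0,0), 3), ((0,1), 4), ((1,0), 5), ((0,1), 0)]

lemma hYgen : cword f2 0 12 = Yw := by decide
lemma hXgen : cword f3 0 12 = Xw := by decide
lemma hZgen : cword f6 0 12 = Zw := by decide

lemma up2 : UniqueWitness 2 Yw := hYgen ▸ cycle_unique f2 0
lemma up3 : UniqueWitness 3 Xw := hXgen ▸ cycle_unique f3 0
lemma up6 : UniqueWitness 6 Zw := hZgen ▸ cycle_unique f6 0

lemma ANY : AN Yw = 2 := by
  unfold AN
  refine le_antisymm (Nat.sInf_le up2) ?_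
  have hmm := Nat.sInf_mem (⟨2, up2⟩ : Set.Nonempty {q | UniqueWitness q Yw})
  by_contra h
  push_neg at h
  exact y_lower _ (by omega) hmm

lemma ANX : AN Xw = 3 := by
  unfold AN
  refine le_antisymm (Nat.sInf_le up3) ?_
  have hmm := Nat.sInf_mem (⟨3, up3⟩ : Set.Nonempty {q | UniqueWitness q Xw})
  by_contra h
  push_neg at h
  exact x_lower _ (by omega) hmm

lemma ANZ : AN Zw = 6 := by
  unfold AN
  refine le_antisymm (Nat.sInf_le up6) ?_
  have hmm := Nat.sInf_mem (⟨6, up6⟩ : Set.Nonempty {q | UniqueWitness q Zw})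
  by_contra h
  push_neg at h
  exact zip_lower _ (by omega) hmm

end Stmt12Aux

theorem stmt12 :
    let x : List (Fin 2) := wpow [0, 1, 0] 4
    let y : List (Fin 2) := wpow [0, 1] 6
    AN (x.zip y) = 6 ∧ AN x = 3 ∧ AN y = 2 ∧ AN x + AN y < AN (x.zip y) := by
  intro x y
  have hx : x = Stmt12Aux.Xw := by
    show wpow [0, 1, 0] 4 = Stmt12Aux.Xw
    decide
  have hy : y = Stmt12Aux.Yw := by
    show wpow [0, 1] 6 = Stmt12Aux.Yw
    decide
  have hz : x.zip y = Stmt12Aux.Zw := by rw [hx, hy]; decide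
  rw [hz, hx, hy, Stmt12Aux.ANZ, Stmt12Aux.ANX, Stmt12Aux.ANY]
  norm_num
end

section
/- Define d(x,y) = log₂(A_N(x|y) · A_N(y|x)) on binary words of length n starting with 0. Then d is symmetric, satisfies the triangle inequality d(x,y) ≤ d(x,z) + d(z,y), and d(x,y) = 0 iff x = y; hence it is a metric on 0{0,1}^(n−1). -/
lemma map_get {α β : Type*} (f : α → β) {l : List α} {m : List β}
    (h : List.map f l = m) (k : ℕ) (hk : k < l.length) (hk' : k < m.length) :
    f l[k] = m[k] := by subst h; simp

lemma condWitness_ne_zero {A B : Type*} (x : List A) (y : List B) :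
    ¬ CondWitness 0 x y := by
  rintro ⟨M, -⟩
  exact M.start.elim0

lemma condWitness_exists {A B : Type*} (x : List A) (y : List B)
    (hlen : x.length = y.length) : CondWitness (y.length + 1) x y := by
  classical
  refine ⟨⟨fun s c t => ∃ h : (s:ℕ) < y.length,
      c = (y.get ⟨s, h⟩, x.get ⟨s, by omega⟩) ∧ (t:ℕ) = (s:ℕ)+1,
    ⟨0, by omega⟩, fun s => (s:ℕ) = y.length⟩, y.zip x,
    fun i => ⟨min i y.length, by omega⟩, ⟨?_, ?_, ?_⟩, ?_, ?_, ?_⟩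
  · exact Fin.ext (by simp)
  · simp [List.length_zip, hlen]
  · intro i h
    have hz : (y.zip x).length = y.length := by simp [List.length_zip, hlen]
    rw [hz] at h
    refine ⟨by simpa using h, ?_, by simp; omega⟩
    simp only [List.get_eq_getElem, List.getElem_zip]
    simp [Nat.min_eq_left h.le]
  · exact List.map_fst_zip (le_of_eq hlen.symm)
  · exact List.map_snd_zip (le_of_eq hlen)
  · intro w' p' hlen' hwalk hfst
    obtain ⟨hstart, haccept, hstep⟩ := hwalk
    have hpval : ∀ i ≤ y.length, (p' i : ℕ) = i := by
      intro i hi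
      induction i with
      | zero => rw [hstart]
      | succ k ih =>
        have hk : k < w'.length := by omega
        obtain ⟨h1, h2, h3⟩ := hstep k hk
        rw [ih (by omega)] at h3
        exact h3
    have hw' : w' = y.zip x := by
      refine List.ext_get (by simp [List.length_zip, hlen, hlen']) ?_
      intro i h1 h2
      have hi : i < y.length := by omega
      obtain ⟨ha, hb, hc⟩ := hstep i h1
      rw [hb]
      have hv : (p' i : ℕ) = i := hpval i hi.le
      simp only [List.get_eq_getElem, List.getElem_zip]
      simp [hv]
    refine ⟨hw', ?_⟩
    intro i hi
    exact Fin.ext (by rw [hpval i hi]; simp [Nat.min_eq_left hi])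

lemma condAN_pos {A B : Type*} (x : List A) (y : List B)
    (hlen : x.length = y.length) : 1 ≤ CondAN x y := by
  have hne : Set.Nonempty {q | CondWitness q x y} := ⟨_, condWitness_exists x y hlen⟩
  have hmem := Nat.sInf_mem hne
  rcases Nat.eq_zero_or_pos (sInf {q | CondWitness q x y}) with h | h
  · rw [h] at hmem; exact absurd hmem (condWitness_ne_zero x y)
  · exact h

lemma condAN_mem {A B : Type*} (x : List A) (y : List B)
    (hlen : x.length = y.length) : CondWitness (CondAN x y) x y := by
  have hne : Set.Nonempty {q | CondWitness q x y} := ⟨_, condWitness_exists x y hlen⟩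
  exact Nat.sInf_mem hne

lemma condAN_self {A : Type*} (x : List A) : CondAN x x = 1 := by
  have h1 : CondWitness 1 x x := by
    refine ⟨⟨fun _ c _ => c.1 = c.2, 0, fun _ => True⟩, x.zip x, fun _ => 0,
      ⟨rfl, trivial, ?_⟩, List.map_fst_zip le_rfl, List.map_snd_zip le_rfl, ?_⟩
    · intro i h
      simp [List.get_eq_getElem, List.getElem_zip]
    · intro w' p' hlen' hwalk hfst
      obtain ⟨-, -, hstep⟩ := hwalk
      constructor
      · refine List.ext_get (by simp [List.length_zip]; omega) ?_
        intro i h1 h2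
        have heq : (w'.get ⟨i, h1⟩).1 = (w'.get ⟨i, h1⟩).2 := hstep i h1
        have hx : w'[i].1 = x[i]'(by omega) :=
          map_get Prod.fst hfst i h1 (by omega)
        simp only [List.get_eq_getElem] at heq ⊢
        simp only [List.getElem_zip]
        exact Prod.ext hx (heq ▸ hx)
      · intro i _; exact Subsingleton.elim _ _
  have hle : CondAN x x ≤ 1 := Nat.sInf_le h1
  have hge : 1 ≤ CondAN x x := condAN_pos x x rfl
  omega

lemma condWitness_one_struct {A B : Type*} (x : List A) (y : List B)
    (h : CondWitness 1 x y) (hlen : x.length = y.length) :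
    ∀ i j (hi : i < y.length) (hj : j < y.length),
      y[i] = y[j] → x[i]'(by omega) = x[j]'(by omega) := by
  obtain ⟨M, w, p, ⟨hstart, haccept, hstep⟩, hfst, hsnd, huniq⟩ := h
  have hwlen : w.length = y.length := by rw [← hfst]; simp
  intro i j hi hj hyij
  have hiw : i < w.length := by omega
  have hjw : j < w.length := by omega
  set w' := w.set i (w[j]) with hw'
  have hw'len : w'.length = y.length := by simp [hw', hwlen]
  have hwalk' : IsAccWalk M w' p := by
    refine ⟨hstart, by rwa [hw'len, ← hwlen], ?_⟩
    intro k hk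
    have hkw : k < w.length := by simpa [hw'] using hk
    by_cases hki : k = i
    · subst hki
      have e : w'.get ⟨k, hk⟩ = w[j] := by
        simp [hw', List.get_eq_getElem, List.getElem_set_self]
      rw [e]
      have hs := hstep j hjw
      have e1 : p k = p j := Subsingleton.elim _ _
      have e2 : p (k+1) = p (j+1) := Subsingleton.elim _ _
      rw [e1, e2]
      simpa [List.get_eq_getElem] using hs
    · have e : w'.get ⟨k, hk⟩ = w.get ⟨k, hkw⟩ := by
        simp only [List.get_eq_getElem, hw']
        exact List.getElem_set_ne (by omega) _
      rw [e]; exact hstep k hkw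
  have hfst' : w'.map Prod.fst = y := by
    refine List.ext_get (by simp [hw'len]) ?_
    intro k h1 h2
    have hkw : k < w.length := by omega
    simp only [List.get_eq_getElem, List.getElem_map]
    by_cases hki : k = i
    · subst hki
      have e : w'[k]'(by omega) = w[j] := by simp [hw', List.getElem_set_self]
      rw [e]
      have : w[j].1 = y[j] := map_get Prod.fst hfst j hjw hj
      rw [this, ← hyij]
    · have e : w'[k]'(by omega) = w[k] := by
        simp only [hw']; exact List.getElem_set_ne (by omega) _
      rw [e]
      exact map_get Prod.fst hfst k hkw (by omega)
  obtain ⟨hww, -⟩ := huniq w' p hw'len hwalk' hfst'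
  have hgeteq : w[j] = w[i] := by
    have e2 : w'[i]'(by omega) = w[j] := by simp [hw', List.getElem_set_self]
    rw [← e2]
    have key : ∀ (l₁ l₂ : List (B × A)) (hl : l₁ = l₂) (h1 : i < l₁.length) (h2 : i < l₂.length),
        l₁[i] = l₂[i] := by intro l₁ l₂ hl h1 h2; subst hl; rfl
    exact key w' w hww (by omega) hiw
  have hsndeq : w[i].2 = w[j].2 := by rw [hgeteq]
  have gx : ∀ k (hk : k < w.length), w[k].2 = x[k]'(by omega) := by
    intro k hk
    exact map_get Prod.snd hsnd k hk (by omega)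
  rw [← gx i hiw, ← gx j hjw]
  exact hsndeq

lemma listGetCongr {α : Type*} {l₁ l₂ : List α} (h : l₁ = l₂) {i : ℕ}
    (h1 : i < l₁.length) (h2 : i < l₂.length) : l₁[i] = l₂[i] := by
  subst h; rfl

lemma condWitness_mul {A B C : Type*} {q1 q2 : ℕ} {x : List A} {z : List C} {y : List B}
    (h1 : CondWitness q1 x z) (h2 : CondWitness q2 z y) :
    CondWitness (q1 * q2) x y := by
  classical
  obtain ⟨M1, w1, p1, ⟨hs1, ha1, hst1⟩, hf1, hg1, hu1⟩ := h1
  obtain ⟨M2, w2, p2, ⟨hs2, ha2, hst2⟩, hf2, hg2, hu2⟩ := h2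
  have hw1z : w1.length = z.length := by rw [← hf1]; simp
  have hw1x : w1.length = x.length := by rw [← hg1]; simp
  have hw2y : w2.length = y.length := by rw [← hf2]; simp
  have hw2z : w2.length = z.length := by rw [← hg2]; simp
  have hxy : x.length = y.length := by omega
  have hzy : z.length = y.length := by omega
  set e : Fin q1 × Fin q2 ≃ Fin (q1*q2) := finProdFinEquiv with he
  refine ⟨⟨fun s c t => ∃ cmid : C,
      M2.step (e.symm s).2 (c.1, cmid) ((e.symm t).2) ∧
        M1.step (e.symm s).1 (cmid, c.2) ((e.symm t).1),
      e (M1.start, M2.start),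
      fun s => M1.accept (e.symm s).1 ∧ M2.accept (e.symm s).2⟩,
    y.zip x, fun i => e (p1 i, p2 i), ⟨?_, ?_, ?_⟩, ?_, ?_, ?_⟩
  · show e (p1 0, p2 0) = _
    rw [hs1, hs2]
  · have hlz : (y.zip x).length = y.length := by simp [List.length_zip]; omega
    rw [hlz]
    have ea1 : M1.accept (p1 y.length) := by rw [← hzy, ← hw1z]; exact ha1
    have ea2 : M2.accept (p2 y.length) := by rw [← hw2y]; exact ha2
    constructor <;> simp [ea1, ea2]
  · intro i h
    have hiy : i < y.length := by
      have h' := h; simp [List.length_zip] at h'; omega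
    refine ⟨z[i]'(by omega), ?_, ?_⟩
    · have hs := hst2 i (by omega)
      have hw2i : w2[i]'(by omega) = (y[i], z[i]'(by omega)) :=
        Prod.ext (map_get Prod.fst hf2 i (by omega) hiy)
          (map_get Prod.snd hg2 i (by omega) (by omega))
      rw [List.get_eq_getElem, hw2i] at hs
      simpa [List.get_eq_getElem, List.getElem_zip] using hs
    · have hs := hst1 i (by omega)
      have hw1i : w1[i]'(by omega) = (z[i]'(by omega), x[i]'(by omega)) :=
        Prod.ext (map_get Prod.fst hf1 i (by omega) (by omega))
          (map_get Prod.snd hg1 i (by omega) (by omega))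
      rw [List.get_eq_getElem, hw1i] at hs
      simpa [List.get_eq_getElem, List.getElem_zip] using hs
  · exact List.map_fst_zip (by omega)
  · exact List.map_snd_zip (by omega)
  · intro w' p' hlen' hwalk hfst
    obtain ⟨hs, ha, hst⟩ := hwalk
    have hmid : ∀ i (hi : i < w'.length), ∃ cmid : C,
        M2.step ((e.symm (p' i)).2) ((w'.get ⟨i, hi⟩).1, cmid) ((e.symm (p' (i+1))).2) ∧
        M1.step ((e.symm (p' i)).1) (cmid, (w'.get ⟨i, hi⟩).2) ((e.symm (p' (i+1))).1) :=
      fun i hi => hst i hi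
    set cm : ∀ i, i < w'.length → C := fun i hi => Classical.choose (hmid i hi) with hcm
    set w2' : List (B × C) :=
      List.ofFn (fun i : Fin w'.length => ((w'.get i).1, cm i i.isLt)) with hw2'
    have hw2'len : w2'.length = w'.length := by simp [hw2']
    set p2' : ℕ → Fin q2 := fun k => (e.symm (p' k)).2 with hp2'
    have hwalk2 : IsAccWalk M2 w2' p2' := by
      refine ⟨by simp [hp2', hs], ?_, ?_⟩
      · rw [hw2'len]; exact ha.2
      · intro k hk
        have hkw : k < w'.length := by omega
        have hget : w2'.get ⟨k, hk⟩ = ((w'.get ⟨k, hkw⟩).1, cm k hkw) := by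
          simp [hw2', List.get_eq_getElem, List.getElem_ofFn]
        rw [hget]
        exact (Classical.choose_spec (hmid k hkw)).1
    have hw2'y : w2'.map Prod.fst = y := by
      refine List.ext_get (by simp [hw2']; omega) ?_
      intro k hk1 hk2
      have hkw : k < w'.length := by simpa [hw2'] using hk1
      simp only [List.get_eq_getElem, List.getElem_map, hw2', List.getElem_ofFn]
      exact map_get Prod.fst hfst k hkw (by omega)
    obtain ⟨hw2eq, hp2eq⟩ := hu2 w2' p2' (by rw [hw2'len, hlen']) hwalk2 hw2'y
    have hcmz : ∀ k (hk : k < w'.length), cm k hk = z[k]'(by omega) := by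
      intro k hk
      have e1 : w2'[k]'(by omega) = ((w'[k]'hk).1, cm k hk) := by
        simp [hw2', List.getElem_ofFn]
      have e2 : w2'[k]'(by omega) = w2[k]'(by omega) := listGetCongr hw2eq _ _
      have e3 : (w2[k]'(by omega)).2 = z[k]'(by omega) :=
        map_get Prod.snd hg2 k (by omega) (by omega)
      have e4 : cm k hk = (w2[k]'(by omega)).2 := congrArg Prod.snd (e1.symm.trans e2)
      rw [e4, e3]
    set w1' : List (C × A) :=
      List.ofFn (fun i : Fin w'.length => (cm i i.isLt, (w'.get i).2)) with hw1'
    set p1' : ℕ → Fin q1 := fun k => (e.symm (p' k)).1 with hp1'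
    have hw1'len : w1'.length = w'.length := by simp [hw1']
    have hwalk1 : IsAccWalk M1 w1' p1' := by
      refine ⟨by simp [hp1', hs], ?_, ?_⟩
      · rw [hw1'len]; exact ha.1
      · intro k hk
        have hkw : k < w'.length := by omega
        have hget : w1'.get ⟨k, hk⟩ = (cm k hkw, (w'.get ⟨k, hkw⟩).2) := by
          simp [hw1', List.get_eq_getElem, List.getElem_ofFn]
        rw [hget]
        exact (Classical.choose_spec (hmid k hkw)).2
    have hw1'z : w1'.map Prod.fst = z := by
      refine List.ext_get (by simp [hw1']; omega) ?_
      intro k hk1 hk2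
      have hkw : k < w'.length := by simpa [hw1'] using hk1
      simp only [List.get_eq_getElem, List.getElem_map, hw1', List.getElem_ofFn]
      exact hcmz k hkw
    obtain ⟨hw1eq, hp1eq⟩ := hu1 w1' p1' (by rw [hw1'len, hlen']; omega) hwalk1 hw1'z
    constructor
    · refine List.ext_get (by simp [List.length_zip]; omega) ?_
      intro k hk1 hk2
      have hky : k < y.length := by omega
      have f1 : (w'[k]'hk1).1 = y[k] := map_get Prod.fst hfst k hk1 hky
      have e1 : w1'[k]'(by omega) = (cm k hk1, (w'[k]'hk1).2) := by
        simp [hw1', List.getElem_ofFn]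
      have e2 : w1'[k]'(by omega) = w1[k]'(by omega) := listGetCongr hw1eq _ _
      have e3 : (w1[k]'(by omega)).2 = x[k]'(by omega) :=
        map_get Prod.snd hg1 k (by omega) (by omega)
      have f2 : (w'[k]'hk1).2 = x[k]'(by omega) :=
        (congrArg Prod.snd (e1.symm.trans e2)).trans e3
      simp only [List.get_eq_getElem, List.getElem_zip]
      exact Prod.ext f1 f2
    · intro i hi
      have l1 : (e.symm (p' i)).1 = p1 i := hp1eq i (by omega)
      have l2 : (e.symm (p' i)).2 = p2 i := hp2eq i hi
      have hpe : e.symm (p' i) = (p1 i, p2 i) := Prod.ext l1 l2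
      show p' i = e (p1 i, p2 i)
      rw [← hpe]; simp

lemma condAN_triangle {A B C : Type*} (x : List A) (z : List C) (y : List B)
    (hxz : x.length = z.length) (hzy : z.length = y.length) :
    CondAN x y ≤ CondAN x z * CondAN z y :=
  Nat.sInf_le (condWitness_mul (condAN_mem x z hxz) (condAN_mem z y hzy))

lemma fin2_eq_one {a : Fin 2} (h : ¬ a = 0) : a = 1 := by
  fin_cases a
  · exact absurd rfl h
  · rfl

lemma head_getElem (x : List (Fin 2)) (h : x.head? = some 0) (hp : 0 < x.length) :
    x[0] = 0 := by
  cases x with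
  | nil => simp at h
  | cons a t => simpa using h

lemma eq_of_one_one (x y : List (Fin 2)) (hlen : x.length = y.length)
    (hpos : 0 < x.length)
    (hx0 : x.head? = some 0) (hy0 : y.head? = some 0)
    (h1 : CondWitness 1 x y) (h2 : CondWitness 1 y x) : x = y := by
  have s1 := condWitness_one_struct x y h1 hlen
  have s2 := condWitness_one_struct y x h2 hlen.symm
  have hx0g : x[0] = 0 := head_getElem x hx0 hpos
  have hy0g : y[0]'(by omega) = 0 := head_getElem y hy0 (by omega)
  refine List.ext_get hlen ?_
  intro i h1i h2i
  simp only [List.get_eq_getElem]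
  by_cases hyi : y[i] = 0
  · have hh : x[i] = x[0]'(by omega) := s1 i 0 h2i (by omega) (by rw [hyi, hy0g])
    rw [hh, hx0g, hyi]
  · by_cases hxi : x[i] = 0
    · exfalso
      have hh : y[i] = y[0]'(by omega) := s2 i 0 h1i (by omega) (by rw [hxi, hx0g])
      rw [hy0g] at hh
      exact hyi hh
    · rw [fin2_eq_one hxi, fin2_eq_one hyi]

/-- `d(x,y) = log₂(A_N(x∣y)·A_N(y∣x))` is a metric on `0{0,1}^(n-1)`. -/
theorem stmt15 (n : ℕ) (hn : 1 ≤ n) (x y z : List (Fin 2))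
    (hx : x.length = n ∧ x.head? = some 0)
    (hy : y.length = n ∧ y.head? = some 0)
    (hz : z.length = n ∧ z.head? = some 0) :
    let d : List (Fin 2) → List (Fin 2) → ℝ :=
      fun u v => Real.logb 2 ((CondAN u v : ℝ) * (CondAN v u : ℝ))
    d x y = d y x ∧ d x y ≤ d x z + d z y ∧ (d x y = 0 ↔ x = y) := by
  intro d
  obtain ⟨hxl, hxh⟩ := hx
  obtain ⟨hyl, hyh⟩ := hy
  obtain ⟨hzl, hzh⟩ := hz
  have hxy : x.length = y.length := by omega
  have hxz : x.length = z.length := by omega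
  have hzy : z.length = y.length := by omega
  have hyz : y.length = z.length := by omega
  have hyx : y.length = x.length := by omega
  have hzx : z.length = x.length := by omega
  have pos : ∀ (u v : List (Fin 2)), u.length = v.length → (1:ℝ) ≤ (CondAN u v : ℝ) := by
    intro u v h
    exact_mod_cast condAN_pos u v h
  refine ⟨?_, ?_, ?_⟩
  · show Real.logb 2 _ = Real.logb 2 _
    rw [mul_comm]
  · show Real.logb 2 ((CondAN x y : ℝ) * (CondAN y x : ℝ)) ≤
      Real.logb 2 ((CondAN x z : ℝ) * (CondAN z x : ℝ)) +
      Real.logb 2 ((CondAN z y : ℝ) * (CondAN y z : ℝ))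
    have p1 := pos x z hxz
    have p2 := pos z x hzx
    have p3 := pos z y hzy
    have p4 := pos y z hyz
    have p5 := pos x y hxy
    have p6 := pos y x hyx
    rw [← Real.logb_mul (by nlinarith) (by nlinarith)]
    have n1 : (CondAN x y : ℝ) ≤ (CondAN x z : ℝ) * (CondAN z y : ℝ) := by
      exact_mod_cast condAN_triangle x z y hxz hzy
    have n2 : (CondAN y x : ℝ) ≤ (CondAN y z : ℝ) * (CondAN z x : ℝ) := by
      exact_mod_cast condAN_triangle y z x hyz hzx
    refine Real.logb_le_logb_of_le (by norm_num) (by nlinarith) ?_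
    nlinarith
  · constructor
    · intro h
      have hge : (1:ℝ) ≤ (CondAN x y : ℝ) * (CondAN y x : ℝ) := by
        have := pos x y hxy; have := pos y x hyx; nlinarith
      have heq1 : (CondAN x y : ℝ) * (CondAN y x : ℝ) = 1 := by
        rcases Real.logb_eq_zero.mp h with h' | h' | h' | h' | h' | h'
        · norm_num at h'
        · norm_num at h'
        · norm_num at h'
        · exfalso; nlinarith
        · exact h'
        · exfalso; nlinarith
      have hnat : CondAN x y * CondAN y x = 1 := by exact_mod_cast heq1
      obtain ⟨e1, e2⟩ : CondAN x y = 1 ∧ CondAN y x = 1 :=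
        ⟨Nat.eq_one_of_mul_eq_one_right hnat, Nat.eq_one_of_mul_eq_one_left hnat⟩
      have w1 : CondWitness 1 x y := e1 ▸ condAN_mem x y hxy
      have w2 : CondWitness 1 y x := e2 ▸ condAN_mem y x hyx
      exact eq_of_one_one x y hxy (by omega) hxh hyh w1 w2
    · rintro rfl
      show Real.logb 2 ((CondAN x x : ℝ) * (CondAN x x : ℝ)) = 0
      rw [condAN_self]
      norm_num
end

section
/- For binary words x, y ∈ 0{0,1}^(n−1): A_N(x | y) = 1 if and only if x = y or x = 0^n. -/
lemma set_getElem_self' {α : Type*} (l : List α) (i : ℕ) (h : i < l.length) :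
    l.set i l[i] = l := by
  apply List.ext_getElem (by simp)
  intro k h1 h2
  simp [List.getElem_set]

lemma condWitness_map (g : Fin 2 → Fin 2) (y : List (Fin 2)) :
    CondWitness 1 (y.map g) y := by
  refine ⟨⟨fun _ c _ => c.2 = g c.1, 0, fun _ => True⟩,
    y.map (fun b => (b, g b)), fun _ => 0, ⟨rfl, trivial, ?_⟩, ?_, ?_, ?_⟩
  · intro i h
    simp [List.get_eq_getElem]
  · simp [List.map_map, Function.comp_def]
  · simp [List.map_map, Function.comp_def]
  · intro w' p' hlen hwalk hfst
    subst hfst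
    constructor
    · apply List.ext_getElem (by simpa using hlen)
      intro i h1 h2
      have hstep := hwalk.2.2 i h1
      simp only [List.get_eq_getElem] at hstep
      simp only [List.getElem_map]
      exact Prod.ext rfl hstep
    · intro i _
      exact Subsingleton.elim _ _

theorem stmt16 (n : ℕ) (x y : List (Fin 2)) (hx : x.length = n) (hy : y.length = n)
    (hx0 : x.head? = some 0) (hy0 : y.head? = some 0) :
    CondAN x y = 1 ↔ x = y ∨ x = List.replicate n 0 := by
  have hn : 0 < n := by
    cases x with
    | nil => simp at hx0
    | cons a t => simp at hx; omega
  constructor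
  · intro h
    have hne : {q | CondWitness q x y}.Nonempty := by
      by_contra hne
      rw [Set.not_nonempty_iff_eq_empty] at hne
      rw [CondAN, hne] at h; simp at h
    have hmem := Nat.sInf_mem hne
    rw [CondAN] at h
    rw [h] at hmem
    obtain ⟨M, w, p, hwalk, hfst, hsnd, huniq⟩ := hmem
    subst hfst; subst hsnd
    -- now x = w.map Prod.snd, y = w.map Prod.fst
    have hwl : w.length = n := by simpa using hy
    have hp : ∀ m, p m = p 0 := fun m => Subsingleton.elim _ _
    have hstep : ∀ k (hk : k < w.length), M.step (p 0) w[k] (p 0) := by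
      intro k hk
      have := hwalk.2.2 k hk
      rw [hp k, hp (k+1)] at this
      simpa using this
    have key : ∀ i j (hi : i < w.length) (hj : j < w.length),
        w[i].1 = w[j].1 → w[i] = w[j] := by
      intro i j hi hj hij
      have hwalk' : IsAccWalk M (w.set j w[i]) p := by
        refine ⟨hwalk.1, ?_, ?_⟩
        · rw [List.length_set]; exact hwalk.2.1
        · intro k hk
          rw [hp k, hp (k+1)]
          rw [List.length_set] at hk
          simp only [List.get_eq_getElem, List.getElem_set]
          split
          · exact hstep i hi
          · exact hstep k hk
      have := huniq (w.set j w[i]) p (by rw [List.length_set, List.length_map]) hwalk' ?_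
      · have hwe := this.1
        have h2 := List.getElem_of_eq hwe (show j < (w.set j w[i]).length by simpa using hj)
        simpa [List.getElem_set] using h2
      · rw [List.map_set, hij]
        rw [← List.getElem_map (f := Prod.fst) (h := by simpa using hj)]
        exact set_getElem_self' _ _ (by simpa using hj)
    have h0w : 0 < w.length := by omega
    have hx0' : w[0].2 = 0 := by
      rw [List.head?_eq_getElem?, List.getElem?_eq_getElem (by simpa using h0w)] at hx0
      simpa using hx0
    have hy0' : w[0].1 = 0 := by
      rw [List.head?_eq_getElem?, List.getElem?_eq_getElem (by simpa using h0w)] at hy0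
      simpa using hy0
    have hzero : ∀ j (hj : j < w.length), w[j].1 = 0 → w[j].2 = 0 := by
      intro j hj h0
      have := key 0 j (by omega) hj (by rw [hy0', h0])
      rw [← this, hx0']
    by_cases hc : ∃ i, ∃ hi : i < w.length, w[i].1 = 1 ∧ w[i].2 = 1
    · left
      obtain ⟨i, hi, hi1, hi2⟩ := hc
      apply List.ext_getElem (by simp)
      intro j h1 h2
      simp only [List.getElem_map]
      have hj : j < w.length := by simpa using h1
      rcases (by omega : w[j].1 = 0 ∨ w[j].1 = 1) with h | h
      · rw [h, hzero j hj h]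
      · have := key i j hi hj (by rw [hi1, h])
        rw [h, ← this, hi2]
    · right
      push_neg at hc
      apply List.ext_getElem (by simpa using hwl)
      intro j h1 h2
      simp only [List.getElem_map, List.getElem_replicate]
      have hj : j < w.length := by simpa using h1
      rcases (by omega : w[j].1 = 0 ∨ w[j].1 = 1) with h | h
      · exact hzero j hj h
      · have := hc j hj h
        omega
  · intro h
    have h1 : CondWitness 1 x y := by
      rcases h with h | h
      · subst h
        simpa using condWitness_map id x
      · have := condWitness_map (fun _ => 0) y
        rw [h, ← hy]
        simpa using this
    have h0 : ¬ CondWitness 0 x y := by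
      rintro ⟨M, -⟩; exact M.start.elim0
    rw [CondAN]
    have hle : sInf {q | CondWitness q x y} ≤ 1 := Nat.sInf_le h1
    have hmem := Nat.sInf_mem (⟨1, h1⟩ : {q | CondWitness q x y}.Nonempty)
    rcases Nat.lt_or_ge (sInf {q | CondWitness q x y}) 1 with hlt | hge
    · interval_cases (sInf {q | CondWitness q x y}) <;> exact absurd hmem h0
    · omega
end

section
/- For every word w of length n, A_N(w) ≤ n/2 + 1 (Hyde's bound), i.e., 2·A_N(w) ≤ n + 2. -/
theorem hydeWitness {α : Type*} (w : List α) : UniqueWitness (w.length / 2 + 1) w := by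
  rcases Nat.eq_zero_or_pos w.length with hn | hn
  · -- trivial case n = 0
    have hw0 : w = [] := List.eq_nil_of_length_eq_zero hn
    subst hw0
    refine ⟨⟨fun _ _ _ => False, ⟨0, by omega⟩, fun _ => True⟩, fun _ => ⟨0, by omega⟩,
      ⟨rfl, trivial, ?_⟩, ?_⟩
    · intro i h; simp at h
    · intro v p' hlen _
      constructor
      · exact List.eq_nil_of_length_eq_zero hlen
      · intro i _
        apply Fin.ext
        have h1 := (p' i).isLt
        simp at h1 ⊢
        omega
  · set n := w.length with hnw
    set m := n / 2 with hm
    set t := 2 * m + 1 with ht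
    have hmn : m < n := Nat.div_lt_self hn one_lt_two
    have hnt : n ≤ t := by omega
    have htn : t ≤ n + 1 := by omega
    have hP : ∀ i : ℕ, min i (t - i) < m + 1 := by intro i; omega
    refine ⟨⟨fun a c b => ∃ j : ℕ, ∃ hj : j < n, (a : ℕ) = min j (t - j) ∧
        (b : ℕ) = min (j + 1) (t - (j + 1)) ∧ c = w.get ⟨j, hj⟩,
      ⟨0, by omega⟩, fun s => (s : ℕ) = t - n⟩,
      fun i => ⟨min i (t - i), hP i⟩, ⟨?_, ?_, ?_⟩, ?_⟩
    · exact Fin.ext (by simp)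
    · show (min n (t - n) : ℕ) = t - n
      omega
    · intro i h
      exact ⟨i, h, rfl, rfl, rfl⟩
    · intro v p' hlen hw
      obtain ⟨h0, hacc, hstep⟩ := hw
      set f : ℕ → ℕ := fun i => (p' i : ℕ) with hf
      have f0 : f 0 = 0 := by rw [hf]; simp [h0]
      have fn : f n = t - n := by
        have : v.length = n := hlen
        rw [hf]; simpa [this] using hacc
      have hstep' : ∀ i (hi : i < n), ∃ j, ∃ hj : j < n, f i = min j (t - j) ∧
          f (i + 1) = min (j + 1) (t - (j + 1)) ∧
          v.get ⟨i, by rw [hlen]; exact hi⟩ = w.get ⟨j, hj⟩ := by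
        intro i hi
        exact hstep i (by rw [hlen]; exact hi)
      -- step inequalities
      have S1 : ∀ i, i < n → f (i + 1) ≤ f i + 1 ∧ f i ≤ f (i + 1) + 1 := by
        intro i hi
        obtain ⟨j, hj, h1, h2, _⟩ := hstep' i hi
        omega
      have Sp : ∀ i, i < n → (f i = m ∧ f (i + 1) = m) ∨ (f i + f (i + 1)) % 2 = 1 := by
        intro i hi
        obtain ⟨j, hj, h1, h2, _⟩ := hstep' i hi
        omega
      -- upper bounds
      have U1 : ∀ i, i ≤ n → f i ≤ i := by
        intro i
        induction i with
        | zero => intro _; omega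
        | succ k ih =>
          intro hk
          have := S1 k (by omega)
          have := ih (by omega)
          omega
      have U2 : ∀ i, i ≤ n → f i + i ≤ t := by
        have aux : ∀ k, k ≤ n → f (n - k) + (n - k) ≤ t := by
          intro k
          induction k with
          | zero => intro _; simpa using by omega
          | succ k ih =>
            intro hk
            have h1 := ih (by omega)
            have h2 := S1 (n - (k + 1)) (by omega)
            have he : n - (k + 1) + 1 = n - k := by omega
            rw [he] at h2
            omega
        intro i hi
        have := aux (n - i) (by omega)
        rw [show n - (n - i) = i from by omega] at this
        exact this
      -- a loop exists
      have hloop : ∃ i, i < n ∧ f i = m ∧ f (i + 1) = m := by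
        by_contra hc
        push_neg at hc
        have par : ∀ i, i ≤ n → (f i + i) % 2 = 0 := by
          intro i
          induction i with
          | zero => intro _; omega
          | succ k ih =>
            intro hk
            have h1 := ih (by omega)
            have h2 := Sp k (by omega)
            rcases h2 with ⟨ha, hb⟩ | h2
            · exact absurd hb (hc k (by omega) ha)
            · omega
        have := par n le_rfl
        omega
      obtain ⟨i0, hi0, hl1, hl2⟩ := hloop
      have hi0m : i0 = m := by
        have := U1 i0 (by omega)
        have := U2 (i0 + 1) (by omega)
        omega
      subst hi0m
      -- lower bounds
      have L1 : ∀ k, k ≤ m → m ≤ f (m - k) + k := by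
        intro k
        induction k with
        | zero => intro _; rw [Nat.sub_zero]; omega
        | succ k ih =>
          intro hk
          have h1 := ih (by omega)
          have h2 := S1 (m - (k + 1)) (by omega)
          have he : m - (k + 1) + 1 = m - k := by omega
          rw [he] at h2
          omega
      have L2 : ∀ k, m + 1 + k ≤ n → t ≤ f (m + 1 + k) + (m + 1 + k) := by
        intro k
        induction k with
        | zero => intro _; rw [Nat.add_zero]; omega
        | succ k ih =>
          intro hk
          have h1 := ih (by omega)
          have h2 := S1 (m + 1 + k) (by omega)
          have he : m + 1 + k + 1 = m + 1 + (k + 1) := by omega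
          rw [he] at h2
          omega
      have feq : ∀ i, i ≤ n → f i = min i (t - i) := by
        intro i hi
        rcases le_or_gt i m with him | him
        · have := U1 i (by omega)
          have := L1 (m - i) (by omega)
          rw [show m - (m - i) = i from by omega] at this
          omega
        · have := U2 i hi
          have := L2 (i - m - 1) (by omega)
          rw [show m + 1 + (i - m - 1) = i from by omega] at this
          omega
      constructor
      · -- v = w
        apply List.ext_get hlen
        intro i h1 h2
        have hi : i < n := h2
        obtain ⟨j, hj, hfi, hfi1, hval⟩ := hstep' i hi
        have e1 := feq i (by omega)
        have e2 := feq (i + 1) (by omega)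
        have hji : j = i := by omega
        subst hji
        have : (⟨j, hj⟩ : Fin w.length) = ⟨j, h2⟩ := rfl
        rw [this] at hval
        exact hval
      · intro i hi
        exact Fin.ext (by simpa using feq i hi)

/-- Hyde's bound: `A_N(w) ≤ n/2 + 1`, i.e. `2·A_N(w) ≤ n + 2`. -/
theorem stmt19 {α : Type*} (w : List α) : 2 * AN w ≤ w.length + 2 := by
  have key := hydeWitness w
  have h : AN w ≤ w.length / 2 + 1 := by
    unfold AN
    exact Nat.sInf_le key
  omega
end
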